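/- Let B_n be the 2x2 matrix with entries b11 = n, b12 = b21 = n(n+1)/2, b22 = n(n+1)(2n+1)/6, and let \lambda_{max}(n), \lambda_{min}(n) be its eigenvalues. Then (\lambda_{max}(n)/\lambda_{min}(n))/n^2 tends to 4/3 as n \to \infty. -/

import Mathlib

open Finset Real Filter

noncomputable def B (n : ℕ) : Matrix (Fin 2) (Fin 2) ℝ :=
  !![(n:ℝ), n*(n+1)/2; n*(n+1)/2, n*(n+1)*(2*n+1)/6]

lemma hB (n : ℕ) : (B n).IsHermitian := by
  show (B n).conjTranspose = B n
  ext i j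
  fin_cases i <;> fin_cases j <;> simp [B]

noncomputable def lmaxB (n : ℕ) : ℝ := max ((hB n).eigenvalues 0) ((hB n).eigenvalues 1)
noncomputable def lminB (n : ℕ) : ℝ := min ((hB n).eigenvalues 0) ((hB n).eigenvalues 1)

/-!
The eigenvalues of the symmetric `2 × 2` matrix `B n` are the roots of `x² - t x + d`, where
`t = n + n(n+1)(2n+1)/6 ~ n³/3` is its trace and `d = n²(n²-1)/12 ~ n⁴/12` its determinant.
Hence `λmax = (t + √(t² - 4d))/2 ~ n³/3`, and `λmax / λmin = λmax² / d ~ (n⁶/9) / (n⁴/12) = 4n²/3`.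
-/

theorem max_eq_add_add_sqrt_div_two (a b : ℝ) :
    max a b = (a + b + √((a + b) ^ 2 - 4 * (a * b))) / 2 := by
  rw [show (a + b) ^ 2 - 4 * (a * b) = (b - a) ^ 2 by ring, sqrt_sq_eq_abs,
    ← max_sub_min_eq_abs]
  linarith [min_add_max a b]

namespace Matrix.IsHermitian

variable {A : Matrix (Fin 2) (Fin 2) ℝ} (hA : A.IsHermitian)

theorem eigenvalues_zero_add_eigenvalues_one : hA.eigenvalues 0 + hA.eigenvalues 1 = A.trace := by
  simp [hA.trace_eq_sum_eigenvalues, Fin.sum_univ_two]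

theorem eigenvalues_zero_mul_eigenvalues_one : hA.eigenvalues 0 * hA.eigenvalues 1 = A.det := by
  simp [hA.det_eq_prod_eigenvalues, Fin.prod_univ_two]

theorem max_eigenvalues_fin_two :
    max (hA.eigenvalues 0) (hA.eigenvalues 1) = (A.trace + √(A.trace ^ 2 - 4 * A.det)) / 2 := by
  rw [max_eq_add_add_sqrt_div_two, hA.eigenvalues_zero_add_eigenvalues_one,
    hA.eigenvalues_zero_mul_eigenvalues_one]

end Matrix.IsHermitian

theorem trace_B (n : ℕ) : (B n).trace = n + n * (n + 1) * (2 * n + 1) / 6 := by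
  simp [B, Matrix.trace_fin_two_of]

theorem det_B (n : ℕ) : (B n).det = (n : ℝ) ^ 2 * ((n : ℝ) ^ 2 - 1) / 12 := by
  rw [B, Matrix.det_fin_two_of]
  ring

theorem tendsto_trace_B_div_pow_three :
    Tendsto (fun n : ℕ => (B n).trace / (n : ℝ) ^ 3) atTop (nhds (1 / 3)) := by
  have h0 : Tendsto (fun n : ℕ => (n : ℝ)⁻¹) atTop (nhds 0) := tendsto_inv_atTop_nhds_zero_nat
  have hlim : Tendsto (fun n : ℕ => (n : ℝ)⁻¹ ^ 2 + (1 + (n : ℝ)⁻¹) * (2 + (n : ℝ)⁻¹) / 6)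
      atTop (nhds (1 / 3)) := by
    convert (h0.pow 2).add (((h0.const_add 1).mul (h0.const_add 2)).div_const 6) using 2
    norm_num
  refine hlim.congr' ?_
  filter_upwards [eventually_ne_atTop 0] with n hn
  rw [trace_B]
  field_simp

theorem tendsto_det_B_div_pow_four :
    Tendsto (fun n : ℕ => (B n).det / (n : ℝ) ^ 4) atTop (nhds (1 / 12)) := by
  have h0 : Tendsto (fun n : ℕ => (n : ℝ)⁻¹) atTop (nhds 0) := tendsto_inv_atTop_nhds_zero_nat
  have hlim : Tendsto (fun n : ℕ => (1 - (n : ℝ)⁻¹ ^ 2) / 12) atTop (nhds (1 / 12)) := by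
    convert ((h0.pow 2).const_sub 1).div_const 12 using 2
    norm_num
  refine hlim.congr' ?_
  filter_upwards [eventually_ne_atTop 0] with n hn
  rw [det_B]
  field_simp

theorem tendsto_lmaxB_div_pow_three :
    Tendsto (fun n : ℕ => lmaxB n / (n : ℝ) ^ 3) atTop (nhds (1 / 3)) := by
  have h0 : Tendsto (fun n : ℕ => (n : ℝ)⁻¹) atTop (nhds 0) := tendsto_inv_atTop_nhds_zero_nat
  have ht := tendsto_trace_B_div_pow_three
  have hlim : Tendsto (fun n : ℕ => ((B n).trace / (n : ℝ) ^ 3 +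
      √(((B n).trace / (n : ℝ) ^ 3) ^ 2 - 4 * ((B n).det / (n : ℝ) ^ 4) * (n : ℝ)⁻¹ ^ 2)) / 2)
      atTop (nhds (1 / 3)) := by
    convert (ht.add (((ht.pow 2).sub ((tendsto_det_B_div_pow_four.const_mul 4).mul
      (h0.pow 2))).sqrt)).div_const 2 using 2
    rw [show ((1 : ℝ) / 3) ^ 2 - 4 * (1 / 12) * 0 ^ 2 = (1 / 3) ^ 2 by norm_num,
      sqrt_sq (by norm_num)]
    norm_num
  refine hlim.congr' ?_
  filter_upwards [eventually_ne_atTop 0] with n hn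
  have hdisc : ((B n).trace / (n : ℝ) ^ 3) ^ 2 - 4 * ((B n).det / (n : ℝ) ^ 4) * (n : ℝ)⁻¹ ^ 2 =
      ((B n).trace ^ 2 - 4 * (B n).det) / ((n : ℝ) ^ 3) ^ 2 := by
    field_simp
  rw [hdisc, sqrt_div' _ (by positivity), sqrt_sq (by positivity), lmaxB,
    (hB n).max_eigenvalues_fin_two]
  ring

/-- Theorem 2: `cond₂(B n) = λmax/λmin ∼ (4/3) n²`. -/
theorem cond_Bn_asymp :
    Filter.Tendsto (fun n : ℕ => (lmaxB n / lminB n) / (n : ℝ)^2)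
      Filter.atTop (nhds (4/3)) := by
  have hlim := (tendsto_lmaxB_div_pow_three.pow 2).div tendsto_det_B_div_pow_four (by norm_num)
  rw [show ((1 : ℝ) / 3) ^ 2 / (1 / 12) = 4 / 3 by norm_num] at hlim
  refine hlim.congr' ?_
  filter_upwards [tendsto_lmaxB_div_pow_three.eventually_ne (by norm_num : (1 : ℝ) / 3 ≠ 0),
    eventually_ne_atTop 0] with n hmax_div hn
  have hmax : lmaxB n ≠ 0 := left_ne_zero_of_mul hmax_div
  show (lmaxB n / (n : ℝ) ^ 3) ^ 2 / ((B n).det / (n : ℝ) ^ 4) = _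
  rw [← (hB n).eigenvalues_zero_mul_eigenvalues_one, ← max_mul_min, ← lmaxB, ← lminB]
  field_simp
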